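/- arXiv:2311.14299 — 2 statements merged into one kernel-verified Lean document; each statement's English description precedes it below -/
import Mathlib

section
/- For a positive integer n, the Schwarzian derivative of f(w) = w^{−n} + log(w) equals (w^{2n} − w^n(2n³ + 2n) − n²(n² − 1)) / (2w²(w^n − n)²) dw². Near w = 0 this expands as ((1 − n²)/2) w^{−2} − 2n w^{n−2} + O(w^{2n−2}); consequently it has a pole of order 2 at w = 0 if n ≥ 2, and a pole of order exactly 1 if n = 1. -/
/-! For `f = w^m + log w` one has `f' = (m w^m + 1)/w`, and every further derivative is again of
the form `(a w^m + b)/w^k`, so the Schwarzian is a rational function of `w^m` and `w`. Putting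
`m = -n` and clearing `w^n` gives the closed form. Near `0` its numerator tends to `-n²(n²-1)`
and `2(w^n - n)²` to `2n²`, so `w² S(f)` tends to `(1-n²)/2`; for `n = 1` the numerator
`w² - 4w` vanishes at `0`, which lowers the order of the pole by one. -/

/-- The Schwarzian derivative `S(f) = (f''/f')' - (1/2)(f''/f')²`. -/
noncomputable def schwarzian (f : ℂ → ℂ) (z : ℂ) : ℂ :=
  deriv (fun w => deriv (deriv f) w / deriv f w) z
    - (1 / 2) * (deriv (deriv f) z / deriv f z) ^ 2

open Complex Filter Topology

theorem schwarzian_eq_of_hasDerivAt {f f₁ f₂ : ℂ → ℂ} {f₃ z : ℂ}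
    (hf : ∀ᶠ w in 𝓝 z, HasDerivAt f (f₁ w) w) (hf₁ : ∀ᶠ w in 𝓝 z, HasDerivAt f₁ (f₂ w) w)
    (hf₂ : HasDerivAt f₂ f₃ z) (h : f₁ z ≠ 0) :
    schwarzian f z = (2 * f₃ * f₁ z - 3 * f₂ z ^ 2) / (2 * f₁ z ^ 2) := by
  have hd₁ : deriv f =ᶠ[𝓝 z] f₁ := hf.mono fun w hw => hw.deriv
  have hd₂ : deriv (deriv f) =ᶠ[𝓝 z] f₂ := hd₁.deriv.trans (hf₁.mono fun w hw => hw.deriv)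
  have hq : (fun w => deriv (deriv f) w / deriv f w) =ᶠ[𝓝 z] f₂ / f₁ := hd₂.div hd₁
  rw [schwarzian, hq.deriv_eq, (hf₂.div hf₁.self_of_nhds h).deriv, hd₁.eq_of_nhds,
    hd₂.eq_of_nhds]
  field_simp
  ring

theorem hasDerivAt_mul_zpow_add_div_pow (a b : ℂ) (m : ℤ) (k : ℕ) {z : ℂ} (hz : z ≠ 0) :
    HasDerivAt (fun w => (a * w ^ m + b) / w ^ k)
      (((m - k) * a * z ^ m - k * b) / z ^ (k + 1)) z := by
  have h := (((hasDerivAt_zpow m z (Or.inl hz)).const_mul a).add_const b).div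
    (hasDerivAt_pow k z) (pow_ne_zero k hz)
  refine h.congr_deriv ?_
  rw [zpow_sub_one₀ hz]
  rcases k with _ | k
  · simp
    ring
  · simp only [Nat.add_sub_cancel]
    push_cast
    field_simp
    ring

theorem hasDerivAt_zpow_add_log (m : ℤ) {z : ℂ} (hz : z ∈ slitPlane) :
    HasDerivAt (fun w => w ^ m + log w) ((m * z ^ m + 1) / z) z := by
  have hz₀ := slitPlane_ne_zero hz
  refine ((hasDerivAt_zpow m z (Or.inl hz₀)).add (hasDerivAt_log hz)).congr_deriv ?_
  rw [zpow_sub_one₀ hz₀]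
  field_simp

theorem schwarzian_zpow_add_log (m : ℤ) {z : ℂ} (hz : z ∈ slitPlane) (h : m * z ^ m + 1 ≠ 0) :
    schwarzian (fun w => w ^ m + log w) z
      = (2 * ((m - 2) * (m - 1) * m * z ^ m + 2) * (m * z ^ m + 1)
          - 3 * ((m - 1) * m * z ^ m - 1) ^ 2) / (2 * z ^ 2 * (m * z ^ m + 1) ^ 2) := by
  have hz₀ := slitPlane_ne_zero hz
  have hf₁ : ∀ᶠ (w : ℂ) in 𝓝 z, HasDerivAt (fun w : ℂ => ((m : ℂ) * w ^ m + 1) / w)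
      (((m - 1) * m * w ^ m - 1) / w ^ 2) w :=
    (isOpen_ne.eventually_mem hz₀).mono fun w hw => by
      simpa only [pow_one] using
        (hasDerivAt_mul_zpow_add_div_pow _ 1 m 1 hw).congr_deriv (by push_cast; ring)
  have hf₂ : HasDerivAt (fun w : ℂ => (((m : ℂ) - 1) * m * w ^ m - 1) / w ^ 2)
      (((m - 2) * (m - 1) * m * z ^ m + 2) / z ^ 3) z := by
    simp only [sub_eq_add_neg _ (1 : ℂ)]
    exact (hasDerivAt_mul_zpow_add_div_pow _ (-1) m 2 hz₀).congr_deriv (by push_cast; ring)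
  rw [schwarzian_eq_of_hasDerivAt
    ((isOpen_slitPlane.eventually_mem hz).mono fun w hw => hasDerivAt_zpow_add_log m hw) hf₁ hf₂
    (div_ne_zero h hz₀)]
  field_simp

theorem schwarzian_zpow_neg_add_log (n : ℕ) {z : ℂ} (hz : z ∈ slitPlane) (h : z ^ n ≠ n) :
    schwarzian (fun w => w ^ (-(n : ℤ)) + log w) z
      = (z ^ (2 * n) - z ^ n * (2 * (n : ℂ) ^ 3 + 2 * n) - (n : ℂ) ^ 2 * ((n : ℂ) ^ 2 - 1))
          / (2 * z ^ 2 * (z ^ n - n) ^ 2) := by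
  have hz₀ := slitPlane_ne_zero hz
  have hzn : z ^ n ≠ 0 := pow_ne_zero n hz₀
  have hsub : z ^ n - n ≠ 0 := sub_ne_zero.2 h
  have hm : ((-(n : ℤ) : ℤ) : ℂ) * z ^ (-(n : ℤ)) + 1 = (z ^ n - n) / z ^ n := by
    rw [zpow_neg, zpow_natCast]
    push_cast
    field_simp
    ring
  rw [schwarzian_zpow_add_log _ hz (hm ▸ div_ne_zero hsub hzn), hm, zpow_neg, zpow_natCast]
  push_cast
  field_simp
  ring

theorem tendsto_pow_mul_div_pow_mul (k : ℕ) {p q : ℂ → ℂ} (hp : ContinuousAt p 0)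
    (hq : ContinuousAt q 0) (h₀ : q 0 ≠ 0) :
    Tendsto (fun w => w ^ k * (p w / (w ^ k * q w))) (𝓝[≠] 0) (𝓝 (p 0 / q 0)) := by
  refine ((hp.div hq h₀).tendsto.mono_left nhdsWithin_le_nhds).congr' ?_
  filter_upwards [self_mem_nhdsWithin] with w hw
  rw [Pi.div_apply, ← mul_div_assoc, mul_div_mul_left _ _ (pow_ne_zero k hw)]

theorem stmt2_general (n : ℕ) :
    (∀ w ∈ Complex.slitPlane, w ^ n ≠ (n : ℂ) →
      schwarzian (fun z => z ^ (-(n : ℤ)) + Complex.log z) w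
        = (w ^ (2 * n) - w ^ n * (2 * (n : ℂ) ^ 3 + 2 * (n : ℂ))
            - (n : ℂ) ^ 2 * ((n : ℂ) ^ 2 - 1)) / (2 * w ^ 2 * (w ^ n - (n : ℂ)) ^ 2)) ∧
    (2 ≤ n →
      Filter.Tendsto (fun w : ℂ => w ^ 2 *
          ((w ^ (2 * n) - w ^ n * (2 * (n : ℂ) ^ 3 + 2 * (n : ℂ))
            - (n : ℂ) ^ 2 * ((n : ℂ) ^ 2 - 1)) / (2 * w ^ 2 * (w ^ n - (n : ℂ)) ^ 2)))
        (nhdsWithin 0 {0}ᶜ) (nhds ((1 - (n : ℂ) ^ 2) / 2)) ∧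
      (1 - (n : ℂ) ^ 2) / 2 ≠ 0) ∧
    (n = 1 →
      Filter.Tendsto (fun w : ℂ => w *
          ((w ^ (2 * n) - w ^ n * (2 * (n : ℂ) ^ 3 + 2 * (n : ℂ))
            - (n : ℂ) ^ 2 * ((n : ℂ) ^ 2 - 1)) / (2 * w ^ 2 * (w ^ n - (n : ℂ)) ^ 2)))
        (nhdsWithin 0 {0}ᶜ) (nhds (-2)) ∧ (-2 : ℂ) ≠ 0) := by
  refine ⟨fun w hw h => schwarzian_zpow_neg_add_log n hw h, fun hn => ⟨?_, ?_⟩, ?_⟩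
  · have hn₀ : (n : ℂ) ≠ 0 := Nat.cast_ne_zero.2 (by omega)
    have h := tendsto_pow_mul_div_pow_mul 2
      (p := fun w => w ^ (2 * n) - w ^ n * (2 * (n : ℂ) ^ 3 + 2 * n) - (n : ℂ) ^ 2 * ((n : ℂ) ^ 2 - 1))
      (q := fun w => 2 * (w ^ n - n) ^ 2) (by fun_prop) (by fun_prop)
      (by simp [zero_pow (by omega : n ≠ 0), hn₀])
    convert h using 2 with w
    · ring
    · simp only [zero_pow (by omega : n ≠ 0), zero_pow (by omega : 2 * n ≠ 0)]
      field_simp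
      ring
  · have hn₂ : (n : ℂ) ^ 2 ≠ 1 := by exact_mod_cast (Nat.one_lt_pow two_ne_zero hn).ne'
    exact div_ne_zero (sub_ne_zero.2 hn₂.symm) two_ne_zero
  · rintro rfl
    refine ⟨?_, by norm_num⟩
    have h := tendsto_pow_mul_div_pow_mul 2 (p := fun w => w - 4) (q := fun w => 2 * (w - 1) ^ 2)
      (by fun_prop) (by fun_prop) (by norm_num)
    convert h using 2 with w
    · push_cast
      ring
    · norm_num

/-- For a positive integer `n`, the Schwarzian derivative of
`f(w) = w^(-n) + log w` equals
`(w^(2n) - w^n(2n³+2n) - n²(n²-1)) / (2w²(w^n - n)²)`.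
If `n ≥ 2` then `w² · S(f)(w) → (1-n²)/2 ≠ 0` as `w → 0` (pole of order 2),
and if `n = 1` then `w · S(f)(w) → -2 ≠ 0` (pole of order exactly 1). -/
theorem stmt2 (n : ℕ) (hn : 1 ≤ n) :
    (∀ w ∈ Complex.slitPlane, w ^ n ≠ (n : ℂ) →
      schwarzian (fun z => z ^ (-(n : ℤ)) + Complex.log z) w
        = (w ^ (2 * n) - w ^ n * (2 * (n : ℂ) ^ 3 + 2 * (n : ℂ))
            - (n : ℂ) ^ 2 * ((n : ℂ) ^ 2 - 1)) / (2 * w ^ 2 * (w ^ n - (n : ℂ)) ^ 2)) ∧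
    (2 ≤ n →
      Filter.Tendsto (fun w : ℂ => w ^ 2 *
          ((w ^ (2 * n) - w ^ n * (2 * (n : ℂ) ^ 3 + 2 * (n : ℂ))
            - (n : ℂ) ^ 2 * ((n : ℂ) ^ 2 - 1)) / (2 * w ^ 2 * (w ^ n - (n : ℂ)) ^ 2)))
        (nhdsWithin 0 {0}ᶜ) (nhds ((1 - (n : ℂ) ^ 2) / 2)) ∧
      (1 - (n : ℂ) ^ 2) / 2 ≠ 0) ∧
    (n = 1 →
      Filter.Tendsto (fun w : ℂ => w *
          ((w ^ (2 * n) - w ^ n * (2 * (n : ℂ) ^ 3 + 2 * (n : ℂ))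
            - (n : ℂ) ^ 2 * ((n : ℂ) ^ 2 - 1)) / (2 * w ^ 2 * (w ^ n - (n : ℂ)) ^ 2)))
        (nhdsWithin 0 {0}ᶜ) (nhds (-2)) ∧ (-2 : ℂ) ≠ 0) :=
  stmt2_general n
end

section
/- Let n ≥ 1 and f(z) = z^{−n} + log(z). Then ∞ is the unique asymptotic value of f at 0: if (s(t), φ(t)) is a path with s(t) → 0 along which f(s(t)e^{iφ(t)}) converges in ℂ (i.e., to a finite value), a contradiction arises. Precisely, boundedness of the real part s^{−n}cos(nφ) + log(s) forces cos(nφ(t)) → 0, but then |sin(nφ(t))| → 1 and the imaginary part −s^{−n} sin(nφ) + φ is unbounded. -/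
/-!
Write `z = s e^{iφ}`. Then `Re F = s^{-n} cos(nφ) + log s` and `Im F = φ - s^{-n} sin(nφ)`.
If `F` converged along the path, multiplying the real part by `s^n` and using `s^n log s → 0`
would give `cos(nφ) → 0`, hence eventually `|sin(nφ)| ≥ 1/2`. Boundedness of the imaginary
part then forces `|φ| ≥ s^{-n}/2 - C → ∞`. But a continuous `nφ` that never meets `πℤ` after
some time stays in one gap between consecutive multiples of `π`, so it cannot be unbounded.
-/

open Filter Real Topology

lemma re_polar (n : ℕ) (s φ : ℝ) :
    ((s : ℂ) ^ (-(n : ℤ)) * Complex.exp (-(n : ℂ) * (φ : ℂ) * Complex.I)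
      + (Real.log s : ℂ) + (φ : ℂ) * Complex.I).re = (s ^ n)⁻¹ * cos (n * φ) + log s := by
  have : -(n : ℂ) * (φ : ℂ) * Complex.I = ((-(n * φ) : ℝ) : ℂ) * Complex.I := by push_cast; ring
  rw [this, zpow_neg, zpow_natCast, ← Complex.ofReal_pow, ← Complex.ofReal_inv]
  simp only [Complex.add_re, Complex.mul_re, Complex.ofReal_re, Complex.ofReal_im,
    Complex.exp_ofReal_mul_I_re, Complex.exp_ofReal_mul_I_im, Complex.I_re, Complex.I_im, cos_neg]
  ring

lemma im_polar (n : ℕ) (s φ : ℝ) :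
    ((s : ℂ) ^ (-(n : ℤ)) * Complex.exp (-(n : ℂ) * (φ : ℂ) * Complex.I)
      + (Real.log s : ℂ) + (φ : ℂ) * Complex.I).im = φ - (s ^ n)⁻¹ * sin (n * φ) := by
  have : -(n : ℂ) * (φ : ℂ) * Complex.I = ((-(n * φ) : ℝ) : ℂ) * Complex.I := by push_cast; ring
  rw [this, zpow_neg, zpow_natCast, ← Complex.ofReal_pow, ← Complex.ofReal_inv]
  simp only [Complex.add_im, Complex.mul_im, Complex.ofReal_re, Complex.ofReal_im,
    Complex.exp_ofReal_mul_I_re, Complex.exp_ofReal_mul_I_im, Complex.I_re, Complex.I_im, sin_neg]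
  ring

section

variable {α : Type*} {l : Filter α}

lemma Filter.Tendsto.pow_nhdsGT_zero {s : α → ℝ} (hs : Tendsto s l (𝓝[>] 0)) {n : ℕ}
    (hn : n ≠ 0) : Tendsto (fun t => s t ^ n) l (𝓝[>] 0) := by
  obtain ⟨hs0, hpos⟩ := tendsto_nhdsWithin_iff.1 hs
  refine tendsto_nhdsWithin_iff.2 ⟨?_, hpos.mono fun t (ht : 0 < s t) => pow_pos ht n⟩
  simpa [zero_pow hn] using hs0.pow n

lemma tendsto_of_tendsto_inv_pow_mul_add_log {s c : α → ℝ} {a : ℝ} {n : ℕ} (hn : n ≠ 0)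
    (hs : Tendsto s l (𝓝[>] 0))
    (h : Tendsto (fun t => (s t ^ n)⁻¹ * c t + log (s t)) l (𝓝 a)) : Tendsto c l (𝓝 0) := by
  have hpow := hs.pow_nhdsGT_zero hn
  have hlog : Tendsto (fun t => log (s t) * s t ^ n) l (𝓝 0) := by
    simpa only [Function.comp_def, rpow_natCast] using
      (tendsto_log_mul_rpow_nhdsGT_zero (r := n) (by positivity)).comp hs
  have hlim := ((tendsto_nhds_of_tendsto_nhdsWithin hpow).mul h).sub hlog
  rw [zero_mul, sub_zero] at hlim
  refine hlim.congr' ?_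
  filter_upwards [(tendsto_nhdsWithin_iff.1 hpow).2] with t ht
  rw [mul_add, mul_inv_cancel_left₀ (ne_of_gt ht)]
  ring

lemma tendsto_abs_atTop_of_tendsto_sub_mul {g σ φ : α → ℝ} {c b : ℝ} (hc : 0 < c)
    (hg : Tendsto g l atTop) (hσ : ∀ᶠ t in l, c ≤ |σ t|)
    (h : Tendsto (fun t => φ t - g t * σ t) l (𝓝 b)) : Tendsto (fun t => |φ t|) l atTop := by
  have hgσ : Tendsto (fun t => |g t * σ t|) l atTop := by
    refine tendsto_atTop_mono' l ?_ (hg.atTop_mul_const hc)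
    filter_upwards [hσ, hg.eventually_ge_atTop 0] with t hσt hgt
    rw [abs_mul, abs_of_nonneg hgt]
    exact mul_le_mul_of_nonneg_left hσt hgt
  refine tendsto_atTop_mono (fun t => ?_) (hgσ.atTop_add h.abs.neg)
  linarith [abs_sub_abs_le_abs_sub (g t * σ t) (φ t), abs_sub_comm (g t * σ t) (φ t)]

end

lemma exists_int_mul_pi_mem_Icc {a b : ℝ} (hab : a + π ≤ b) :
    ∃ k : ℤ, (k : ℝ) * π ∈ Set.Icc a b := by
  refine ⟨⌈a / π⌉, ?_, ?_⟩
  · rw [← div_le_iff₀ pi_pos]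
    exact Int.le_ceil _
  · have : (⌈a / π⌉ : ℝ) < (a + π) / π := by
      rw [add_div, div_self pi_ne_zero]
      exact Int.ceil_lt_add_one _
    linarith [(lt_div_iff₀ pi_pos).1 this]

lemma not_tendsto_abs_atTop_of_eventually_sin_ne_zero {h : ℝ → ℝ} (hcont : Continuous h)
    (hsin : ∀ᶠ t in atTop, sin (h t) ≠ 0) : ¬ Tendsto (fun t => |h t|) atTop atTop := by
  intro htop
  obtain ⟨T, hT⟩ := eventually_atTop.1 hsin
  obtain ⟨t₁, hjump, hTt₁⟩ :=
    ((htop.eventually_ge_atTop (|h T| + π)).and (eventually_ge_atTop T)).exists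
  have hwide : min (h T) (h t₁) + π ≤ max (h T) (h t₁) := by
    linarith [max_sub_min_eq_abs (h T) (h t₁), abs_sub_abs_le_abs_sub (h t₁) (h T)]
  obtain ⟨k, hk⟩ := exists_int_mul_pi_mem_Icc hwide
  rw [Set.Icc_min_max] at hk
  obtain ⟨t₂, ht₂, hkt₂⟩ := intermediate_value_uIcc hcont.continuousOn hk
  rw [Set.uIcc_of_le hTt₁] at ht₂
  exact hT t₂ ht₂.1 (by rw [hkt₂]; exact sin_int_mul_pi k)

/-- For `n ≥ 1` and `f(z) = z^{-n} + log z`, in polar coordinates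
`F(s,φ) = s^{-n} e^{-inφ} + log s + iφ` (on the universal cover of the
punctured disk): `∞` is the *unique* asymptotic value at `0`, i.e. along no
continuous path `(s(t), φ(t))` with `s(t) → 0` does `F` converge to a finite
value `L ∈ ℂ`. -/
theorem stmt15 (n : ℕ) (hn : 1 ≤ n) :
    let F : ℝ → ℝ → ℂ := fun s φ =>
      (s : ℂ) ^ (-(n : ℤ)) * Complex.exp (-(n : ℂ) * (φ : ℂ) * Complex.I)
        + (Real.log s : ℂ) + (φ : ℂ) * Complex.I
    ∀ (s φ : ℝ → ℝ) (L : ℂ), Continuous s → Continuous φ → (∀ t, 0 < s t) →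
      Filter.Tendsto s Filter.atTop (nhds 0) →
      ¬ Filter.Tendsto (fun t => F (s t) (φ t)) Filter.atTop (nhds L) := by
  intro F s φ L _ hφ hpos hs0 hF
  have hn₀ : n ≠ 0 := Nat.one_le_iff_ne_zero.1 hn
  have hs : Tendsto s atTop (𝓝[>] 0) := tendsto_nhdsWithin_iff.2 ⟨hs0, .of_forall hpos⟩
  have hre : Tendsto (fun t => (s t ^ n)⁻¹ * cos (n * φ t) + log (s t)) atTop (𝓝 L.re) := by
    simpa only [Function.comp_def, F, re_polar] using (Complex.continuous_re.tendsto L).comp hF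
  have him : Tendsto (fun t => φ t - (s t ^ n)⁻¹ * sin (n * φ t)) atTop (𝓝 L.im) := by
    simpa only [Function.comp_def, F, im_polar] using (Complex.continuous_im.tendsto L).comp hF
  have hcos := tendsto_of_tendsto_inv_pow_mul_add_log hn₀ hs hre
  have hsin : ∀ᶠ t in atTop, 1 / 2 ≤ |sin (n * φ t)| := by
    filter_upwards [hcos.abs.eventually (gt_mem_nhds (by norm_num : |(0 : ℝ)| < 1 / 2))]
      with t ht
    nlinarith [sin_sq_add_cos_sq (n * φ t), sq_abs (sin (n * φ t)), sq_abs (cos (n * φ t)),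
      abs_nonneg (sin (n * φ t)), abs_nonneg (cos (n * φ t))]
  have hφ_top := tendsto_abs_atTop_of_tendsto_sub_mul (by norm_num)
    (hs.pow_nhdsGT_zero hn₀).inv_tendsto_nhdsGT_zero hsin him
  have hnφ_top : Tendsto (fun t => |n * φ t|) atTop atTop := by
    simpa only [abs_mul, Nat.abs_cast] using hφ_top.const_mul_atTop (by positivity : (0 : ℝ) < n)
  refine not_tendsto_abs_atTop_of_eventually_sin_ne_zero (h := fun t => n * φ t)
    (by fun_prop) ?_ hnφ_top
  filter_upwards [hsin] with t ht h0
  norm_num [h0] at ht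
end
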